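/- There is a universal constant C > 0 with the following property. Let 0 < h < H < ∞ and let F ∈ A_h, where A_h is the Banach space of 2π-periodic functions f : ℝ → ℝ admitting a bounded holomorphic continuation to the open strip {z ∈ ℂ : |Im z| < h}, with norm ‖f‖_{A_h} equal to the supremum over the strip of the absolute value of the continuation. Then there exists ε₀ > 0 (which may depend on F, h, H) such that for all ε ∈ (0, ε₀): log₂ 𝓐_ε^{A_H}(F) ≤ C·(H/h)·log₂(1/ε); equivalently, there exists a 2π-periodic function G admitting a bounded holomorphic continuation to {|Im z| < H} with sup_{x∈ℝ} |F(x) − G(x)| ≤ ε and ‖G‖_{A_H} ≤ (1/ε)^{C·H/h}. -/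

import Mathlib

open scoped Real

open Complex

/-- Geometric-type sum over ℤ. -/
lemma hasSum_pow_natAbs {s : ℝ} (h0 : 0 ≤ s) (h1 : s < 1) :
    HasSum (fun n : ℤ => s ^ n.natAbs) ((1 - s)⁻¹ + s * (1 - s)⁻¹) := by
  have hp : HasSum (fun n : ℕ => s ^ n) (1 - s)⁻¹ := hasSum_geometric_of_lt_one h0 h1
  refine HasSum.of_nat_of_neg_add_one ?_ ?_
  · simpa using hp
  · have := hp.mul_left s
    convert this using 2 with n
    · rfl
    have : ((-((n : ℤ) + 1))).natAbs = n + 1 := by omega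
    rw [this, pow_succ]
    ring

lemma strip_preconnected {h : ℝ} : IsPreconnected {z : ℂ | |z.im| < h} := by
  have : {z : ℂ | |z.im| < h} = Complex.imLm ⁻¹' Set.Ioo (-h) h := by
    ext z; simp [abs_lt, Complex.imLm]
  rw [this]
  exact ((convex_Ioo (-h) h).linear_preimage Complex.imLm).isPreconnected

lemma strip_open {h : ℝ} : IsOpen {z : ℂ | |z.im| < h} :=
  isOpen_lt (continuous_abs.comp Complex.continuous_im) continuous_const
/-- a holomorphic function on a strip which is `2π`-periodic on the reals is periodic. -/
lemma g_periodic {h : ℝ} (hh : 0 < h) {g : ℂ → ℂ}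
    (hg : DifferentiableOn ℂ g {z : ℂ | |z.im| < h})
    (hper : ∀ x : ℝ, g (x + 2 * π) = g x) :
    ∀ z ∈ {z : ℂ | |z.im| < h}, g (z + 2 * π) = g z := by
  set S := {z : ℂ | |z.im| < h} with hS
  have hmem : ∀ z ∈ S, z + 2 * π ∈ S := by
    intro z hz
    simp only [hS, Set.mem_setOf_eq] at hz ⊢
    simpa using hz
  have hd : DifferentiableOn ℂ (fun z => g (z + 2 * π) - g z) S := by
    refine DifferentiableOn.sub ?_ hg
    exact (hg.comp (by fun_prop) hmem)
  have hA : AnalyticOnNhd ℂ (fun z => g (z + 2 * π) - g z) S :=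
    hd.analyticOnNhd strip_open
  have h0 : (0 : ℂ) ∈ S := by simp [hS, hh]
  have hfreq : ∃ᶠ z in nhdsWithin (0 : ℂ) {(0:ℂ)}ᶜ, g (z + 2 * π) - g z = 0 := by
    rw [Filter.frequently_iff]
    intro U hU
    rw [Metric.mem_nhdsWithin_iff] at hU
    obtain ⟨ε, hε, hsub⟩ := hU
    refine ⟨((ε/2 : ℝ) : ℂ), hsub ⟨?_, ?_⟩, ?_⟩
    · simp only [Metric.mem_ball, dist_zero_right]
      rw [Complex.norm_real]
      rw [Real.norm_eq_abs, abs_of_pos (by linarith : (0:ℝ) < ε/2)]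
      linarith
    · simp only [Set.mem_compl_iff, Set.mem_singleton_iff]
      exact_mod_cast (by positivity : (ε/2 : ℝ) ≠ 0)
    · have := hper (ε/2)
      push_cast at this ⊢
      rw [this, sub_self]
  have := hA.eqOn_zero_of_preconnected_of_frequently_eq_zero strip_preconnected h0 hfreq
  intro z hz
  have := this hz
  simpa [sub_eq_zero] using this

lemma contour_bound {h B : ℝ} (hh : 0 < h) (hB : 0 ≤ B) {g : ℂ → ℂ}
    (hg : DifferentiableOn ℂ g {z : ℂ | |z.im| < h})
    (hbd : ∀ z ∈ {z : ℂ | |z.im| < h}, ‖g z‖ ≤ B)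
    (hper : ∀ z ∈ {z : ℂ | |z.im| < h}, g (z + 2 * π) = g z) (n : ℤ) :
    ‖∫ x in (0:ℝ)..(2*π), g x * Complex.exp (-(n:ℂ) * x * I)‖
      ≤ 2 * π * B * Real.exp (-(h/2) * n.natAbs) := by
  set S := {z : ℂ | |z.im| < h} with hS
  set y₀ : ℝ := if 0 ≤ n then -(h/2) else h/2 with hy₀def
  have hy₀abs : |y₀| = h/2 := by
    rw [hy₀def]; split_ifs
    · rw [_root_.abs_of_nonpos (by linarith)]; ring
    · rw [_root_.abs_of_nonneg (by linarith)]
  have hy₀lt : |y₀| < h := by rw [hy₀abs]; linarith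
  have hny₀ : (n : ℝ) * y₀ ≤ -(h/2) * n.natAbs := by
    rw [hy₀def, Nat.cast_natAbs, Int.cast_abs]; split_ifs with hn
    · rw [_root_.abs_of_nonneg (by exact_mod_cast hn : (0:ℝ) ≤ (n:ℝ))]; nlinarith [hh]
    · push_neg at hn
      have : (n:ℝ) ≤ 0 := by exact_mod_cast hn.le
      rw [_root_.abs_of_nonpos this]; nlinarith [hh]
  set φ : ℂ → ℂ := fun z => g z * Complex.exp (-(n:ℂ) * z * I) with hφ
  have hφdiff : DifferentiableOn ℂ φ S := by
    apply hg.mul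
    apply Differentiable.differentiableOn
    fun_prop
  -- the rectangle
  have hrect := Complex.integral_boundary_rect_eq_zero_of_differentiableOn φ 0
      ((2*π : ℝ) + (y₀ : ℂ) * I) ?rectdiff
  case rectdiff =>
    apply hφdiff.mono
    intro z hz
    rw [Complex.mem_reProdIm] at hz
    obtain ⟨-, hz2⟩ := hz
    simp only [Complex.zero_im, Complex.add_im, Complex.ofReal_im, Complex.mul_im,
      Complex.ofReal_re, Complex.I_im, Complex.I_re, mul_zero, mul_one, zero_add,
      add_zero] at hz2
    simp only [hS, Set.mem_setOf_eq]
    have h1 : min 0 y₀ ≤ z.im := hz2.1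
    have h2 : z.im ≤ max 0 y₀ := hz2.2
    have := neg_abs_le y₀; have := le_abs_self y₀
    rw [abs_lt]
    constructor
    · have : -(h/2) ≤ min 0 y₀ := le_min (by linarith) (by rw [← hy₀abs]; linarith)
      linarith
    · have : max 0 y₀ ≤ h/2 := max_le (by linarith) (by rw [← hy₀abs]; linarith)
      linarith
  -- simplify endpoints in hrect
  simp only [Complex.zero_re, Complex.zero_im, Complex.add_re, Complex.add_im,
    Complex.ofReal_re, Complex.ofReal_im, Complex.mul_re, Complex.mul_im,
    Complex.I_re, Complex.I_im, mul_zero, mul_one, zero_mul, zero_add, add_zero,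
    zero_sub, sub_zero, neg_zero, Complex.ofReal_zero] at hrect
  -- vertical sides agree
  have hvert : (∫ y in (0:ℝ)..y₀, φ ((2*π : ℝ) + (y:ℝ) * I))
      = ∫ y in (0:ℝ)..y₀, φ ((y:ℝ) * I) := by
    apply intervalIntegral.integral_congr
    intro y hy
    have hyabs : |y| < h := by
      rcases Set.mem_uIcc.mp hy with ⟨h1, h2⟩ | ⟨h1, h2⟩
      · rw [_root_.abs_of_nonneg h1]
        calc y ≤ y₀ := h2
        _ ≤ |y₀| := le_abs_self _
        _ < h := hy₀lt
      · rw [_root_.abs_of_nonpos h2]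
        calc -y ≤ -y₀ := by linarith
        _ ≤ |y₀| := neg_le_abs _
        _ < h := hy₀lt
    have hmem : ((y:ℂ) * I) ∈ S := by
      simp only [hS, Set.mem_setOf_eq, Complex.mul_im, Complex.ofReal_re, Complex.ofReal_im,
        Complex.I_im, Complex.I_re, mul_one, mul_zero, zero_add, add_zero]
      exact hyabs
    have hgper : g ((2*π : ℝ) + (y:ℂ) * I) = g ((y:ℂ) * I) := by
      have := hper _ hmem
      have e1 : ((2*π : ℝ) : ℂ) + (y:ℂ) * I = (y:ℂ) * I + 2 * π := by push_cast; ring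
      rw [e1, this]
    have hexp : Complex.exp (-(n:ℂ) * ((2*π:ℝ) + (y:ℂ) * I) * I)
        = Complex.exp (-(n:ℂ) * ((y:ℂ) * I) * I) := by
      have e3 : -(n:ℂ) * (((2*π:ℝ):ℂ) + (y:ℂ) * I) * I
          = -(n:ℂ) * ((y:ℂ) * I) * I + ((-n : ℤ) : ℂ) * (2 * π * I) := by
        push_cast; ring
      rw [e3, Complex.exp_add, Complex.exp_int_mul_two_pi_mul_I, mul_one]
    simp only [hφ]
    rw [hgper, hexp]
  rw [hvert] at hrect
  simp only [smul_eq_mul] at hrect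
  have hAB : (∫ x in (0:ℝ)..(2*π), φ x) = ∫ x in (0:ℝ)..(2*π), φ ((x:ℂ) + (y₀:ℂ) * I) := by
    linear_combination hrect
  have hgoal : (∫ x in (0:ℝ)..(2*π), g x * Complex.exp (-(n:ℂ) * x * I))
      = ∫ x in (0:ℝ)..(2*π), φ x := rfl
  rw [hgoal, hAB]
  have hbound : ∀ x ∈ Set.uIoc (0:ℝ) (2*π),
      ‖φ ((x:ℂ) + (y₀:ℂ) * I)‖ ≤ B * Real.exp (-(h/2) * n.natAbs) := by
    intro x hx
    have hmem : ((x:ℂ) + (y₀:ℂ) * I) ∈ S := by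
      simp only [hS, Set.mem_setOf_eq, Complex.add_im, Complex.ofReal_im, Complex.mul_im,
        Complex.ofReal_re, Complex.I_im, Complex.I_re, mul_one, mul_zero, zero_add, add_zero]
      exact hy₀lt
    have hre : (-(n:ℂ) * ((x:ℂ) + (y₀:ℂ) * I) * I).re = (n:ℝ) * y₀ := by
      have e4 : -(n:ℂ) * ((x:ℂ) + (y₀:ℂ) * I) * I
          = (((n:ℝ) * y₀ : ℝ) : ℂ) + ((-(n * x) : ℝ) : ℂ) * I := by push_cast; ring_nf; rw [Complex.I_sq]; ring
      rw [e4]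
      simp
    simp only [hφ]
    rw [norm_mul, Complex.norm_exp, hre]
    have h1 := hbd _ hmem
    have h2 : Real.exp ((n:ℝ) * y₀) ≤ Real.exp (-(h/2) * n.natAbs) := Real.exp_le_exp.mpr hny₀
    exact mul_le_mul h1 h2 (Real.exp_pos _).le hB
  calc ‖∫ x in (0:ℝ)..(2*π), φ ((x:ℂ) + (y₀:ℂ) * I)‖
      ≤ B * Real.exp (-(h/2) * n.natAbs) * |2*π - 0| :=
        intervalIntegral.norm_integral_le_of_norm_le_const hbound
    _ = 2 * π * B * Real.exp (-(h/2) * n.natAbs) := by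
        rw [sub_zero, _root_.abs_of_pos (by positivity : (0:ℝ) < 2*π)]; ring

set_option maxHeartbeats 2000000 in
/-- Lemma 2: if `F ∈ A_h` (a 2π-periodic real function with a bounded holomorphic
continuation to the strip of half-width `h`), then for all small enough `ε > 0` there
is `G ∈ A_H` (`H > h`) with `sup|F − G| ≤ ε` and `‖G‖_{A_H} ≤ (1/ε)^{C·H/h}`,
i.e. `log₂ 𝓐_ε^{A_H}(F) ≤ C (H/h) log₂(1/ε)`. -/
theorem stmt17 : ∃ C : ℝ, 0 < C ∧
    ∀ h H : ℝ, 0 < h → h < H →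
      ∀ F : ℝ → ℝ, Function.Periodic F (2 * π) →
        (∃ g : ℂ → ℂ,
          DifferentiableOn ℂ g {z : ℂ | |z.im| < h} ∧
          (∃ B : ℝ, ∀ z ∈ {z : ℂ | |z.im| < h}, ‖g z‖ ≤ B) ∧
          (∀ x : ℝ, g ↑x = ↑(F x))) →
        ∃ ε₀ : ℝ, 0 < ε₀ ∧ ∀ ε ∈ Set.Ioo (0 : ℝ) ε₀,
          ∃ (G : ℝ → ℝ) (g' : ℂ → ℂ),
            Function.Periodic G (2 * π) ∧
            DifferentiableOn ℂ g' {z : ℂ | |z.im| < H} ∧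
            (∀ x : ℝ, g' ↑x = ↑(G x)) ∧
            (∀ x : ℝ, |F x - G x| ≤ ε) ∧
            (∀ z ∈ {z : ℂ | |z.im| < H},
              ‖g' z‖ ≤ (1 / ε) ^ (C * H / h)) := by
  refine ⟨5, by norm_num, ?_⟩
  intro h H hh hhH F hFper hex
  obtain ⟨g, hg, ⟨B₀, hB₀⟩, hgF⟩ := hex
  set S := {z : ℂ | |z.im| < h} with hSdef
  set B := max B₀ 1 with hBdef
  have hB1 : 1 ≤ B := le_max_right _ _
  have hB0 : 0 < B := lt_of_lt_of_le one_pos hB1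
  have hB : ∀ z ∈ S, ‖g z‖ ≤ B := fun z hz => (hB₀ z hz).trans (le_max_left _ _)
  -- g is 2π-periodic on the strip
  have hper_real : ∀ x : ℝ, g (↑x + 2 * π) = g ↑x := by
    intro x
    have h1 : (↑x + 2 * π : ℂ) = ((x + 2 * π : ℝ) : ℂ) := by push_cast; ring
    rw [h1, hgF, hgF, hFper x]
  have hgper : ∀ z ∈ S, g (z + 2 * π) = g z := g_periodic hh hg hper_real
  -- F is continuous
  have hFcont : Continuous F := by
    have hmem : ∀ x : ℝ, ((x : ℂ)) ∈ S := by
      intro x; simp [hSdef, hh]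
    have h1 : Continuous fun x : ℝ => g ↑x :=
      hg.continuousOn.comp_continuous Complex.continuous_ofReal hmem
    have h2 : F = fun x : ℝ => (g ↑x).re := by
      funext x; rw [hgF x]; simp
    rw [h2]; exact Complex.continuous_re.comp h1
  haveI : Fact (0 < 2 * π) := ⟨by positivity⟩
  -- the function on the circle
  set FC : ℝ → ℂ := fun x => (F x : ℂ) with hFCdef
  have hFCper : Function.Periodic FC (2 * π) := fun x => by simp [hFCdef, hFper x]
  have hFCcont : Continuous FC := Complex.continuous_ofReal.comp hFcont
  have hliftcont : Continuous hFCper.lift := by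
    exact hFCcont.quotient_liftOn' _
  set fC : C(AddCircle (2 * π), ℂ) := ⟨hFCper.lift, hliftcont⟩ with hfCdef
  have hfC_coe : ∀ x : ℝ, fC ↑x = (F x : ℂ) := fun x => rfl
  set c : ℤ → ℂ := fourierCoeff ⇑fC with hcdef
  -- fourier characters as exponentials
  have hfour : ∀ (m : ℤ) (x : ℝ),
      (fourier m (↑x : AddCircle (2 * π)) : ℂ) = Complex.exp ((m : ℂ) * x * I) := by
    intro m x
    rw [fourier_coe_apply]
    congr 1
    have hπ : ((2 * π : ℝ) : ℂ) ≠ 0 := by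
      simp only [ne_eq, Complex.ofReal_eq_zero]
      positivity
    rw [div_eq_iff hπ]
    push_cast
    ring
  -- integral formula for coefficients
  have hc_int : ∀ n : ℤ, c n = (1 / (2 * π) : ℂ) *
      ∫ x in (0:ℝ)..(2 * π), g ↑x * Complex.exp (-(n : ℂ) * ↑x * I) := by
    intro n
    rw [hcdef, fourierCoeff_eq_intervalIntegral ⇑fC n 0]
    rw [zero_add]
    have : ∀ x : ℝ, (fourier (-n) (↑x : AddCircle (2 * π)) : ℂ) • fC ↑x
        = g ↑x * Complex.exp (-(n : ℂ) * ↑x * I) := by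
      intro x
      rw [smul_eq_mul, hfour (-n) x, hfC_coe x, ← hgF x, mul_comm]
      congr 2
      push_cast; ring
    rw [intervalIntegral.integral_congr (fun x _ => this x)]
    simp [smul_eq_mul, Complex.ofReal_mul]
  -- coefficient bound
  have hcb : ∀ n : ℤ, ‖c n‖ ≤ B * Real.exp (-(h/2) * n.natAbs) := by
    intro n
    rw [hc_int n]
    rw [norm_mul]
    have h1 : ‖(1 / (2 * π) : ℂ)‖ = 1 / (2 * π) := by
      rw [norm_div, norm_one]
      congr 1
      rw [show ((2:ℂ) * (π:ℂ)) = (((2 * π : ℝ)) : ℂ) from by push_cast; ring, Complex.norm_real, Real.norm_eq_abs,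
        _root_.abs_of_pos (by positivity)]
    rw [h1]
    have h2 := contour_bound hh hB0.le hg hB hgper n
    calc 1 / (2*π) * ‖∫ x in (0:ℝ)..(2*π), g ↑x * Complex.exp (-(n:ℂ) * ↑x * I)‖
        ≤ 1 / (2*π) * (2 * π * B * Real.exp (-(h/2) * n.natAbs)) := by
          apply mul_le_mul_of_nonneg_left h2 (by positivity)
      _ = B * Real.exp (-(h/2) * n.natAbs) := by field_simp
  -- geometric decay quantities
  have hH0 : 0 < H := lt_trans hh hhH
  obtain ⟨s, hsdef⟩ : ∃ s : ℝ, s = Real.exp (-(h/4)) := ⟨_, rfl⟩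
  have hs0 : 0 < s := by rw [hsdef]; exact Real.exp_pos _
  have hs1 : s < 1 := by
    rw [hsdef]
    calc Real.exp (-(h/4)) < Real.exp 0 := Real.exp_lt_exp.mpr (by linarith)
      _ = 1 := Real.exp_zero
  have hss0 : 0 ≤ s * s := by positivity
  have hss1 : s * s < 1 := by nlinarith only [hs0, hs1]
  have hek : ∀ k : ℕ, Real.exp (-(h/2) * k) = s ^ k * s ^ k := by
    intro k
    rw [hsdef, ← Real.exp_nat_mul, ← Real.exp_add]
    congr 1
    ring
  have hcb2 : ∀ n : ℤ, ‖c n‖ ≤ B * (s ^ n.natAbs * s ^ n.natAbs) := by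
    intro n
    rw [← hek]
    exact hcb n
  have hsum : Summable c := by
    have hmaj : Summable (fun n : ℤ => B * (s ^ n.natAbs * s ^ n.natAbs)) := by
      have h1 : Summable (fun n : ℤ => B * (s*s) ^ n.natAbs) :=
        ((hasSum_pow_natAbs hss0 hss1).summable).mul_left B
      simpa [mul_pow] using h1
    exact Summable.of_norm_bounded hmaj
      (fun n => by exact hcb2 n)
  have hps : ∀ x : ℝ, HasSum (fun i : ℤ => c i * Complex.exp ((i:ℂ) * ↑x * I)) ((F x : ℂ)) := by
    intro x
    have h0 := has_pointwise_sum_fourier_series_of_summable (f := fC) hsum (↑x)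
    have h1 : (fun i : ℤ => fourierCoeff ⇑fC i • (fourier i (↑x : AddCircle (2*π)) : ℂ))
        = fun i : ℤ => c i * Complex.exp ((i:ℂ) * ↑x * I) := by
      funext i
      rw [smul_eq_mul, hfour i x, hcdef]
    rw [h1] at h0
    exact h0
  -- numeric constants
  obtain ⟨K, hKdef⟩ : ∃ K : ℝ, K = 2 * (1 - s)⁻¹ := ⟨_, rfl⟩
  have hs1' : 0 < 1 - s := by linarith
  have hK0 : 0 < K := by rw [hKdef]; positivity
  have hinv1 : 1 ≤ (1 - s)⁻¹ := (one_le_inv₀ hs1').mpr (by linarith)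
  have hK2 : 2 ≤ K := by rw [hKdef]; linarith only [hinv1]
  have hBK1 : 1 ≤ B * K := by
    have h15 : 1*2 ≤ B*K := mul_le_mul hB1 hK2 (by norm_num) (by linarith only [hB1])
    linarith only [h15]
  obtain ⟨α, hαdef⟩ : ∃ α : ℝ, α = 2 + 48/h^2 + (4/h) * Real.log (B*K) := ⟨_, rfl⟩
  have hlogBK0 : 0 ≤ Real.log (B*K) := Real.log_nonneg hBK1
  have h4h0 : 0 < 4/h := by positivity
  have h48' : (0:ℝ) ≤ 48/h^2 := by positivity
  have hα2 : 2 + 48/h^2 ≤ α := by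
    rw [hαdef]
    linarith only [mul_nonneg h4h0.le hlogBK0]
  have hα0 : 0 < α := by linarith only [hα2, h48']
  obtain ⟨Q, hQdef⟩ : ∃ Q : ℝ, Q = max 0 (Real.log B + α * H) := ⟨_, rfl⟩
  refine ⟨min 1 (Real.exp (-(Q+1))), by positivity, ?_⟩
  intro ε hε
  obtain ⟨hε0, hεlt⟩ := hε
  have hε1 : ε < 1 := lt_of_lt_of_le hεlt (min_le_left _ _)
  have hεQ : ε < Real.exp (-(Q+1)) := lt_of_lt_of_le hεlt (min_le_right _ _)
  obtain ⟨L, hLdef⟩ : ∃ L : ℝ, L = Real.log (1/ε) := ⟨_, rfl⟩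
  have hLε : L = -Real.log ε := by rw [hLdef, one_div, Real.log_inv]
  have hL0 : 0 < L := by
    rw [hLdef]
    apply Real.log_pos
    rw [lt_div_iff₀ hε0]
    linarith only [hε1]
  have hQL : Q + 1 ≤ L := by
    have h1 := Real.log_lt_log hε0 hεQ
    rw [Real.log_exp] at h1
    rw [hLε]; linarith only [h1]
  have hQge : Real.log B + α * H ≤ Q := by rw [hQdef]; exact le_max_right _ _
  have hQ0 : 0 ≤ Q := by rw [hQdef]; exact le_max_left _ _
  obtain ⟨M, hMdef⟩ : ∃ M : ℝ, M = max (1 + 48/h^2) ((4/h) * Real.log (B*K/ε)) := ⟨_, rfl⟩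
  have hlogBKε : Real.log (B*K/ε) = Real.log (B*K) + L := by
    rw [Real.log_div (by positivity) hε0.ne', hLε]; ring
  have hM0 : 0 ≤ M := by rw [hMdef]; exact le_trans (by positivity) (le_max_left _ _)
  obtain ⟨N, hNdef⟩ : ∃ N : ℕ, N = ⌈M⌉₊ := ⟨_, rfl⟩
  have hMN : M ≤ (N:ℝ) := by rw [hNdef]; exact Nat.le_ceil M
  have hM1 : 1 + 48/h^2 ≤ M := by rw [hMdef]; exact le_max_left _ _
  have hN48 : 48/h^2 ≤ (N:ℝ) := by linarith only [hM1, hMN]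
  have hN1 : 1 ≤ (N:ℝ) := by linarith only [hM1, hMN, h48']
  have hNlog : (4/h) * Real.log (B*K/ε) ≤ (N:ℝ) := by
    refine le_trans ?_ hMN
    rw [hMdef]; exact le_max_right _ _
  have hNM1 : (N:ℝ) ≤ M + 1 := by rw [hNdef]; linarith [Nat.ceil_lt_add_one hM0]
  have hNup : (N:ℝ) ≤ α + (4/h) * L := by
    have hMle : M ≤ α - 1 + (4/h) * L := by
      rw [hMdef]
      apply max_le
      · linarith only [hα2, mul_nonneg h4h0.le hL0.le]
      · rw [hlogBKε, mul_add]
        linarith only [hαdef, h48', mul_nonneg h4h0.le hlogBK0]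
    linarith only [hMle, hNM1]
  have hcard2 : 2*(N:ℝ)+1 ≤ Real.exp ((N:ℝ) * (h/2)) := by
    have he : Real.exp ((N:ℝ)*(h/2)) = Real.exp ((N:ℝ)*(h/4)) * Real.exp ((N:ℝ)*(h/4)) := by
      rw [← Real.exp_add]; congr 1; ring
    have h2 : (N:ℝ)*(h/4) + 1 ≤ Real.exp ((N:ℝ)*(h/4)) := Real.add_one_le_exp _
    have h48N : 48 ≤ (N:ℝ) * h^2 := by
      have h3 := mul_le_mul_of_nonneg_right hN48 (sq_nonneg h)
      rw [div_mul_cancel₀ _ (by positivity : h^2 ≠ 0)] at h3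
      linarith only [h3]
    have hNh4 : 0 ≤ (N:ℝ)*(h/4) + 1 := by positivity
    have hEE := mul_le_mul h2 h2 hNh4 (Real.exp_pos _).le
    rw [he]
    have h5 : 48 * (N:ℝ) ≤ ((N:ℝ)*h^2) * N := by
      apply mul_le_mul_of_nonneg_right h48N (Nat.cast_nonneg N)
    nlinarith only [hEE, h5, hN1, mul_nonneg (Nat.cast_nonneg N : (0:ℝ) ≤ (N:ℝ)) hh.le]
  have hsN : s ^ N ≤ ε / (B*K) := by
    have h1 : Real.log (B*K/ε) ≤ (N:ℝ) * (h/4) := by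
      calc Real.log (B*K/ε) = ((4/h) * Real.log (B*K/ε)) * (h/4) := by field_simp
        _ ≤ (N:ℝ) * (h/4) := mul_le_mul_of_nonneg_right hNlog (by linarith only [hh])
    have h2 : s ^ N = Real.exp ((N:ℝ) * (-(h/4))) := by rw [hsdef, ← Real.exp_nat_mul]
    rw [h2]
    have h3 : Real.exp ((N:ℝ)*(-(h/4))) ≤ Real.exp (-Real.log (B*K/ε)) :=
      Real.exp_le_exp.mpr (by linarith)
    rwa [Real.exp_neg, Real.exp_log (by positivity), inv_div] at h3
  have hHh1 : 1 ≤ H/h := (one_le_div hh).mpr hhH.le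
  have hNHle : Real.log B + (N:ℝ)*H ≤ 5 * H / h * L := by
    have hNH : (N:ℝ)*H ≤ (α + (4/h)*L)*H := mul_le_mul_of_nonneg_right hNup hH0.le
    have hkey : Real.log B + α*H ≤ H/h * L := by
      have h12 := mul_le_mul_of_nonneg_right hHh1 hL0.le
      rw [one_mul] at h12
      linarith only [hQge, hQL, h12]
    have e1 : (α + (4/h)*L)*H = α*H + 4*(H/h*L) := by ring
    rw [e1] at hNH
    have e2 : 5*H/h*L = 5*(H/h*L) := by ring
    rw [e2]
    linarith only [hNH, hkey]
  have hRHS : (1/ε : ℝ) ^ ((5:ℝ) * H / h) = Real.exp (5 * H / h * L) := by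
    rw [Real.rpow_def_of_pos (by positivity), ← hLdef]
    congr 1
    ring
  -- construction of the approximant
  obtain ⟨T, hTdef⟩ : ∃ T : Finset ℤ, T = Finset.Icc (-(N:ℤ)) (N:ℤ) := ⟨_, rfl⟩
  obtain ⟨d, hddef⟩ : ∃ d : ℤ → ℂ, ∀ n, d n = (c n + (starRingEnd ℂ) (c (-n))) / 2 :=
    ⟨_, fun _ => rfl⟩
  obtain ⟨g', hg'def⟩ : ∃ g' : ℂ → ℂ, ∀ z, g' z = ∑ n ∈ T, d n * Complex.exp ((n:ℂ) * z * I) :=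
    ⟨_, fun _ => rfl⟩
  have hdbound : ∀ n : ℤ, ‖d n‖ ≤ B * (s^n.natAbs * s^n.natAbs) := by
    intro n
    have h1 : ‖d n‖ ≤ (‖c n‖ + ‖(starRingEnd ℂ) (c (-n))‖)/2 := by
      rw [hddef n, norm_div, Complex.norm_two]
      have := norm_add_le (c n) ((starRingEnd ℂ) (c (-n)))
      linarith only [this]
    rw [Complex.norm_conj] at h1
    have h2 := hcb2 n
    have h3 := hcb2 (-n)
    rw [Int.natAbs_neg] at h3
    linarith only [h1, h2, h3]
  have hTmem : ∀ i : ℤ, i ∈ T ↔ -i ∈ T := by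
    intro i; rw [hTdef]; simp only [Finset.mem_Icc]; omega
  have hg'conj : ∀ x : ℝ, (starRingEnd ℂ) (g' ↑x) = g' ↑x := by
    intro x
    rw [hg'def, map_sum]
    have hterm : ∀ n : ℤ, (starRingEnd ℂ) (d n * Complex.exp ((n:ℂ)*↑x*I))
        = d (-n) * Complex.exp ((((-n : ℤ)):ℂ)*↑x*I) := by
      intro n
      rw [map_mul]
      congr 1
      · rw [hddef n, hddef (-n), map_div₀, map_add, Complex.conj_conj, neg_neg]
        rw [map_ofNat]
        rw [add_comm]
      · rw [← Complex.exp_conj]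
        congr 1
        rw [map_mul, map_mul, Complex.conj_I, Complex.conj_ofReal]
        rw [map_intCast]
        push_cast
        ring
    rw [Finset.sum_congr rfl (fun n _ => hterm n)]
    refine Finset.sum_equiv (Equiv.neg ℤ) (fun i => hTmem i) ?_
    intro i _
    simp only [Equiv.neg_apply]
  have hg'x : ∀ x : ℝ, g' ↑x = (((g' ↑x).re : ℝ) : ℂ) :=
    fun x => (Complex.conj_eq_iff_re.mp (hg'conj x)).symm
  obtain ⟨G, hGdef⟩ : ∃ G : ℝ → ℝ, ∀ x, G x = (g' ↑x).re := ⟨_, fun _ => rfl⟩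
  have hGper : Function.Periodic G (2*π) := by
    intro x
    rw [hGdef (x + 2*π), hGdef x]
    congr 1
    rw [hg'def, hg'def]
    apply Finset.sum_congr rfl
    intro n _
    congr 1
    have h1 : ((n:ℂ) * ((x + 2*π : ℝ) : ℂ) * I) = (n:ℂ)*(x:ℂ)*I + (n:ℤ) * (2*(π:ℂ)*I) := by
      push_cast; ring
    rw [h1, Complex.exp_add, Complex.exp_int_mul_two_pi_mul_I, mul_one]
  have hg'diff : Differentiable ℂ g' := by
    have h10 : Differentiable ℂ (fun z => ∑ n ∈ T, d n * Complex.exp ((n:ℂ) * z * I)) := by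
      apply Differentiable.fun_sum
      intro i _
      apply Differentiable.const_mul
      apply Differentiable.cexp
      fun_prop
    have h11 : g' = fun z => ∑ n ∈ T, d n * Complex.exp ((n:ℂ) * z * I) := funext hg'def
    rw [h11]
    exact h10
  -- approximation bound
  have happrox : ∀ x : ℝ, |F x - G x| ≤ ε := by
    intro x
    obtain ⟨Sx, hSxdef⟩ : ∃ Sx : ℂ, Sx = ∑ n ∈ T, c n * Complex.exp ((n:ℂ) * ↑x * I) := ⟨_, rfl⟩
    have h1 : HasSum (fun n : ℤ => if n ∈ T then c n * Complex.exp ((n:ℂ)*↑x*I) else 0) Sx := by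
      have h0 := hasSum_sum_of_ne_finset_zero (s := T) (L := SummationFilter.unconditional ℤ)
        (f := fun n : ℤ => if n ∈ T then c n * Complex.exp ((n:ℂ)*↑x*I) else 0)
        (fun b hb => if_neg hb)
      rw [hSxdef]
      rwa [Finset.sum_congr rfl (fun b hb => if_pos hb)] at h0
    have h2 : HasSum (fun n : ℤ => c n * Complex.exp ((n:ℂ)*↑x*I)
        - (if n ∈ T then c n * Complex.exp ((n:ℂ)*↑x*I) else 0)) ((F x : ℂ) - Sx) :=
      (hps x).sub h1
    obtain ⟨e, hedef⟩ : ∃ e : ℤ → ℂ,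
        ∀ n, e n = if n ∈ T then 0 else c n * Complex.exp ((n:ℂ)*↑x*I) := ⟨_, fun _ => rfl⟩
    have he : (fun n : ℤ => c n * Complex.exp ((n:ℂ)*↑x*I)
        - (if n ∈ T then c n * Complex.exp ((n:ℂ)*↑x*I) else 0)) = e := by
      funext n
      rw [hedef n]
      split_ifs <;> simp
    rw [he] at h2
    obtain ⟨μ, hμdef⟩ : ∃ μ : ℤ → ℝ,
        ∀ n, μ n = (B * s ^ (N+1)) * (s ^ n.natAbs) := ⟨_, fun _ => rfl⟩
    have hμsum : Summable μ := by
      have h7 := ((hasSum_pow_natAbs hs0.le hs1).summable).mul_left (B * s ^ (N+1))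
      apply h7.congr
      intro n
      rw [hμdef n]
    have hele : ∀ n : ℤ, ‖e n‖ ≤ μ n := by
      intro n
      rw [hedef n, hμdef n]
      split_ifs with hn
      · simp only [norm_zero]
        positivity
      · have hnat : N + 1 ≤ n.natAbs := by
          rw [hTdef] at hn
          simp only [Finset.mem_Icc] at hn
          omega
        rw [norm_mul]
        have habs1 : ‖Complex.exp ((n:ℂ)*↑x*I)‖ = 1 := by
          rw [Complex.norm_exp]
          have hre0 : ((n:ℂ)*↑x*I).re = 0 := by
            simp [Complex.mul_re, Complex.mul_im]
          rw [hre0, Real.exp_zero]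
        rw [habs1, mul_one]
        calc ‖c n‖ ≤ B * (s^n.natAbs * s^n.natAbs) := hcb2 n
          _ ≤ B * (s^(N+1) * s^n.natAbs) := by
              have h13 : s^n.natAbs ≤ s^(N+1) := pow_le_pow_of_le_one hs0.le hs1.le hnat
              have h14 : s^n.natAbs * s^n.natAbs ≤ s^(N+1) * s^n.natAbs :=
                mul_le_mul_of_nonneg_right h13 (pow_nonneg hs0.le _)
              exact mul_le_mul_of_nonneg_left h14 hB0.le
          _ = B * s^(N+1) * s^n.natAbs := by ring
    have hesum : Summable (fun n : ℤ => ‖e n‖) :=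
      Summable.of_nonneg_of_le (fun n => norm_nonneg _) hele hμsum
    have hFS : ‖(F x : ℂ) - Sx‖ ≤ (B * s^(N+1)) * ((1-s)⁻¹ + s*(1-s)⁻¹) := by
      rw [← h2.tsum_eq]
      calc ‖∑' n, e n‖ ≤ ∑' n, ‖e n‖ := norm_tsum_le_tsum_norm hesum
        _ ≤ ∑' n, μ n := Summable.tsum_le_tsum hele hesum hμsum
        _ = (B * s^(N+1)) * ((1-s)⁻¹ + s*(1-s)⁻¹) := by
            have h8 := ((hasSum_pow_natAbs hs0.le hs1).mul_left (B * s ^ (N+1)))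
            have h9 : HasSum μ ((B * s^(N+1)) * ((1-s)⁻¹ + s*(1-s)⁻¹)) := by
              have h9' : μ = fun n : ℤ => (B * s^(N+1)) * (s ^ n.natAbs) := funext hμdef
              rw [h9']
              exact h8
            exact h9.tsum_eq
    have hFS2 : ‖(F x : ℂ) - Sx‖ ≤ ε := by
      have hfac : (1-s)⁻¹ + s*(1-s)⁻¹ ≤ K := by
        rw [hKdef]
        linarith only [mul_nonneg (sub_nonneg.mpr hs1.le) (inv_nonneg.mpr hs1'.le)]
      have hsN1 : s^(N+1) ≤ s^N := pow_le_pow_of_le_one hs0.le hs1.le (Nat.le_succ N)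
      have hfac0 : 0 ≤ (1-s)⁻¹ + s*(1-s)⁻¹ := by positivity
      calc ‖(F x : ℂ) - Sx‖ ≤ (B * s^(N+1)) * ((1-s)⁻¹ + s*(1-s)⁻¹) := hFS
        _ ≤ (B * s^N) * K := by
            apply mul_le_mul _ hfac _ (by positivity)
            · exact mul_le_mul_of_nonneg_left hsN1 hB0.le
            · exact hfac0
        _ ≤ (B * (ε/(B*K))) * K := by
            apply mul_le_mul_of_nonneg_right _ hK0.le
            exact mul_le_mul_of_nonneg_left hsN hB0.le
        _ = ε := by field_simp
    have hconjS : (starRingEnd ℂ) Sx = ∑ n ∈ T, (starRingEnd ℂ) (c (-n)) * Complex.exp ((n:ℂ)*↑x*I) := by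
      rw [hSxdef, map_sum]
      refine Finset.sum_equiv (Equiv.neg ℤ) (fun i => hTmem i) ?_
      intro i _
      simp only [Equiv.neg_apply, neg_neg]
      rw [map_mul, ← Complex.exp_conj]
      congr 1
      rw [map_mul, map_mul, Complex.conj_I, Complex.conj_ofReal, map_intCast]
      push_cast
      ring
    have hgS : g' ↑x = (Sx + (starRingEnd ℂ) Sx)/2 := by
      rw [hg'def, hconjS, hSxdef, ← Finset.sum_add_distrib, Finset.sum_div]
      apply Finset.sum_congr rfl
      intro n _
      rw [hddef n]
      ring
    have hkey : ((F x : ℂ)) - g' ↑x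
        = (((F x : ℂ) - Sx) + (starRingEnd ℂ) ((F x : ℂ) - Sx))/2 := by
      rw [hgS, map_sub, Complex.conj_ofReal]
      ring
    have habs2 : ‖(F x : ℂ) - g' ↑x‖ ≤ ε := by
      rw [hkey, norm_div, Complex.norm_two]
      have h5 := norm_add_le ((F x : ℂ) - Sx) ((starRingEnd ℂ) ((F x : ℂ) - Sx))
      rw [Complex.norm_conj] at h5
      linarith only [h5, hFS2]
    have hcast : ((F x - G x : ℝ) : ℂ) = (F x : ℂ) - g' ↑x := by
      rw [hg'x x, hGdef x]
      push_cast
      ring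
    calc |F x - G x| = ‖((F x - G x : ℝ) : ℂ)‖ := by rw [Complex.norm_real, Real.norm_eq_abs]
      _ = ‖(F x : ℂ) - g' ↑x‖ := by rw [hcast]
      _ ≤ ε := habs2
  -- norm bound on the bigger strip
  have hnormbd : ∀ z ∈ {z : ℂ | |z.im| < H},
      ‖g' z‖ ≤ (1/ε : ℝ) ^ ((5:ℝ) * H / h) := by
    intro z hz
    simp only [Set.mem_setOf_eq] at hz
    have hterm : ∀ n ∈ T, ‖d n * Complex.exp ((n:ℂ)*z*I)‖
        ≤ B * Real.exp ((N:ℝ)*(H - h/2)) := by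
      intro n hn
      have hna : (n.natAbs : ℝ) ≤ (N:ℝ) := by
        rw [hTdef] at hn
        simp only [Finset.mem_Icc] at hn
        have : n.natAbs ≤ N := by omega
        exact_mod_cast this
      rw [norm_mul, Complex.norm_exp]
      have hre : ((n:ℂ)*z*I).re = -((n:ℝ) * z.im) := by
        simp [Complex.mul_re, Complex.mul_im]
      rw [hre]
      have h1 : -((n:ℝ)*z.im) ≤ (n.natAbs : ℝ) * H := by
        calc -((n:ℝ)*z.im) ≤ |(n:ℝ)*z.im| := neg_le_abs _
          _ = |(n:ℝ)| * |z.im| := abs_mul _ _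
          _ ≤ |(n:ℝ)| * H := mul_le_mul_of_nonneg_left hz.le (abs_nonneg _)
          _ = (n.natAbs : ℝ) * H := by rw [Nat.cast_natAbs, Int.cast_abs]
      calc ‖d n‖ * Real.exp (-((n:ℝ)*z.im))
          ≤ (B * (s^n.natAbs * s^n.natAbs)) * Real.exp ((n.natAbs:ℝ) * H) :=
            mul_le_mul (hdbound n) (Real.exp_le_exp.mpr h1) (Real.exp_pos _).le (by positivity)
        _ = B * Real.exp ((n.natAbs:ℝ) * (H - h/2)) := by
            rw [← hek n.natAbs, mul_assoc, ← Real.exp_add]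
            congr 1
            ring
        _ ≤ B * Real.exp ((N:ℝ) * (H - h/2)) := by
            apply mul_le_mul_of_nonneg_left _ hB0.le
            apply Real.exp_le_exp.mpr
            apply mul_le_mul_of_nonneg_right hna (by linarith only [hh, hhH])
    have hTcard : (T.card : ℝ) = 2*(N:ℝ)+1 := by
      rw [hTdef, Int.card_Icc]
      have h6 : ((N:ℤ) + 1 - -(N:ℤ)).toNat = 2*N+1 := by omega
      rw [h6]
      push_cast
      ring
    have hsum_le : ‖g' z‖ ≤ (2*(N:ℝ)+1) * (B * Real.exp ((N:ℝ)*(H - h/2))) := by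
      rw [hg'def, ← hTcard]
      calc ‖∑ n ∈ T, d n * Complex.exp ((n:ℂ)*z*I)‖
          ≤ ∑ n ∈ T, ‖d n * Complex.exp ((n:ℂ)*z*I)‖ := norm_sum_le _ _
        _ ≤ ∑ _n ∈ T, (B * Real.exp ((N:ℝ)*(H-h/2))) :=
            Finset.sum_le_sum (fun n hn => by exact hterm n hn)
        _ = T.card * (B * Real.exp ((N:ℝ)*(H-h/2))) := by
            rw [Finset.sum_const, nsmul_eq_mul]
    calc ‖g' z‖ ≤ (2*(N:ℝ)+1) * (B * Real.exp ((N:ℝ)*(H-h/2))) := hsum_le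
      _ ≤ Real.exp ((N:ℝ)*(h/2)) * (B * Real.exp ((N:ℝ)*(H-h/2))) :=
          mul_le_mul_of_nonneg_right hcard2 (by positivity)
      _ = B * (Real.exp ((N:ℝ)*(h/2)) * Real.exp ((N:ℝ)*(H-h/2))) := by ring
      _ = B * Real.exp ((N:ℝ)*H) := by
          rw [← Real.exp_add]
          congr 2
          ring
      _ = Real.exp (Real.log B + (N:ℝ)*H) := by
          rw [Real.exp_add, Real.exp_log hB0]
      _ ≤ Real.exp (5*H/h*L) := Real.exp_le_exp.mpr hNHle
      _ = (1/ε : ℝ) ^ ((5:ℝ)*H/h) := hRHS.symm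
  refine ⟨G, g', hGper, hg'diff.differentiableOn, ?_, happrox, hnormbd⟩
  intro x
  rw [hGdef x]
  exact hg'x x
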